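/- Let v_θ and v_θ̃ be tanh feedforward neural networks with the same architecture of depth L ≥ 2, width W, and input dimension n₀ ≤ W, whose parameter vectors satisfy |θ|_{l^∞} ≤ B_θ, |θ̃|_{l^∞} ≤ B_θ with B_θ ≥ 1. Then for every x ∈ [−1, 1]^{n₀} and every coordinate index i, |∂v_θ/∂x_i (x) − ∂v_θ̃/∂x_i (x)| ≤ L² W^{2L−2} B_θ^{2L−2} |θ − θ̃|_{l^∞}. -/

import Mathlib

/-- The hidden-layer outputs of a feedforward neural network with activation `tanh`:
`tanhHidden n A b x 0 = x` is the input, and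
`tanhHidden n A b x (l+1) = σ(Tˡ⁺¹(tanhHidden n A b x l))` with `σ = tanh` componentwise,
where `Tˡ⁺¹(y) = A l · y + b l` (`0`-based parameter indexing). -/
noncomputable def tanhHidden (n : ℕ → ℕ)
    (A : ∀ l : ℕ, Fin (n (l + 1)) → Fin (n l) → ℝ)
    (b : ∀ l : ℕ, Fin (n (l + 1)) → ℝ)
    (x : Fin (n 0) → ℝ) : ∀ l : ℕ, Fin (n l) → ℝ
  | 0 => x
  | l + 1 => fun i =>
      Real.tanh (∑ j, A l i j * tanhHidden n A b x l j + b l i)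

/-- The output of a depth-`L` feedforward `tanh` neural network with layer widths
`n 0, n 1, …, n L`: the affine map `T^L` (no activation) applied to the `(L-1)`-st
hidden layer. -/
noncomputable def tanhNet (L : ℕ) (n : ℕ → ℕ)
    (A : ∀ l : ℕ, Fin (n (l + 1)) → Fin (n l) → ℝ)
    (b : ∀ l : ℕ, Fin (n (l + 1)) → ℝ)
    (x : Fin (n 0) → ℝ) : Fin (n (L - 1 + 1)) → ℝ :=
  fun i => ∑ j, A (L - 1) i j * tanhHidden n A b x (L - 1) j + b (L - 1) i

/-! ### Auxiliary lemmas about `tanh` -/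

lemma my_hasDerivAt_tanh (x : ℝ) : HasDerivAt Real.tanh (1 - Real.tanh x ^ 2) x := by
  have hc : Real.cosh x ≠ 0 := (Real.cosh_pos x).ne'
  have h := (Real.hasDerivAt_sinh x).div (Real.hasDerivAt_cosh x) hc
  have hval : (Real.cosh x * Real.cosh x - Real.sinh x * Real.sinh x) / Real.cosh x ^ 2
      = 1 - (Real.sinh x / Real.cosh x) ^ 2 := by
    have h2 := Real.cosh_sq_sub_sinh_sq x
    field_simp
  rw [hval] at h
  have hfun : Real.tanh = fun y => Real.sinh y / Real.cosh y := by
    funext y; exact Real.tanh_eq_sinh_div_cosh y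
  rw [hfun]
  exact h

lemma my_abs_tanh_le_one (x : ℝ) : |Real.tanh x| ≤ 1 := by
  have h2 := Real.cosh_sq_sub_sinh_sq x
  have hc := Real.cosh_pos x
  rw [Real.tanh_eq_sinh_div_cosh, abs_div, abs_of_pos hc, div_le_one hc]
  rcases abs_cases (Real.sinh x) with ⟨h, _⟩ | ⟨h, _⟩ <;> nlinarith

lemma my_abs_one_sub_tanh_sq_le_one (x : ℝ) : |1 - Real.tanh x ^ 2| ≤ 1 := by
  have h := my_abs_tanh_le_one x
  rcases abs_cases (Real.tanh x) with ⟨h1, _⟩ | ⟨h1, _⟩ <;>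
    rcases abs_cases (1 - Real.tanh x ^ 2) with ⟨h2, _⟩ | ⟨h2, _⟩ <;> nlinarith

lemma my_tanh_lipschitz (a c : ℝ) : |Real.tanh a - Real.tanh c| ≤ |a - c| := by
  have := Convex.norm_image_sub_le_of_norm_hasDerivWithin_le
    (f := Real.tanh) (f' := fun y => 1 - Real.tanh y ^ 2) (s := Set.univ) (C := 1)
    (fun y _ => (my_hasDerivAt_tanh y).hasDerivWithinAt)
    (fun y _ => by rw [Real.norm_eq_abs]; exact my_abs_one_sub_tanh_sq_le_one y)
    convex_univ (Set.mem_univ c) (Set.mem_univ a)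
  simpa [Real.norm_eq_abs] using this

lemma my_cubic (t : ℝ) (ht : |t| ≤ 1) : |2 * t * (1 - t ^ 2)| ≤ 1 := by
  have hsq : (1 : ℝ) - t ^ 2 = 1 - |t| ^ 2 := by rw [sq_abs]
  have hnn : (0:ℝ) ≤ 1 - t ^ 2 := by rw [hsq]; nlinarith [abs_nonneg t]
  have h1 : |2 * t * (1 - t ^ 2)| = 2 * |t| * (1 - |t| ^ 2) := by
    rw [abs_mul, abs_mul, abs_two, abs_of_nonneg hnn, hsq]
  rw [h1]
  nlinarith [abs_nonneg t, mul_nonneg (abs_nonneg t) (sq_nonneg (2 * |t| - 1)),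
    sq_nonneg (|t| - 5/8)]

lemma my_dtanh_lipschitz (a c : ℝ) :
    |(1 - Real.tanh a ^ 2) - (1 - Real.tanh c ^ 2)| ≤ |a - c| := by
  have hd : ∀ y : ℝ, HasDerivAt (fun z => 1 - Real.tanh z ^ 2)
      (-(2 * Real.tanh y * (1 - Real.tanh y ^ 2))) y := by
    intro y
    have := ((my_hasDerivAt_tanh y).pow 2).const_sub 1
    simpa [mul_comm, mul_assoc, mul_left_comm] using this
  have := Convex.norm_image_sub_le_of_norm_hasDerivWithin_le
    (f := fun z => 1 - Real.tanh z ^ 2)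
    (f' := fun y => -(2 * Real.tanh y * (1 - Real.tanh y ^ 2))) (s := Set.univ) (C := 1)
    (fun y _ => (hd y).hasDerivWithinAt)
    (fun y _ => by
      rw [Real.norm_eq_abs, abs_neg]
      exact my_cubic _ (my_abs_tanh_le_one y))
    convex_univ (Set.mem_univ c) (Set.mem_univ a)
  simpa [Real.norm_eq_abs] using this

/-! ### Directional derivatives of the hidden layers -/

/-- Directional derivative of the hidden layers along a direction `u`. -/
noncomputable def tanhDir (n : ℕ → ℕ)
    (A : ∀ l : ℕ, Fin (n (l + 1)) → Fin (n l) → ℝ)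
    (b : ∀ l : ℕ, Fin (n (l + 1)) → ℝ)
    (x u : Fin (n 0) → ℝ) : ∀ l : ℕ, Fin (n l) → ℝ
  | 0 => u
  | l + 1 => fun i =>
      (1 - Real.tanh (∑ j, A l i j * tanhHidden n A b x l j + b l i) ^ 2) *
        ∑ j, A l i j * tanhDir n A b x u l j

lemma tanhHidden_hasFDerivAt (n : ℕ → ℕ)
    (A : ∀ l : ℕ, Fin (n (l + 1)) → Fin (n l) → ℝ)
    (b : ∀ l : ℕ, Fin (n (l + 1)) → ℝ)
    (x u : Fin (n 0) → ℝ) :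
    ∀ (l : ℕ) (i : Fin (n l)), ∃ F : (Fin (n 0) → ℝ) →L[ℝ] ℝ,
      HasFDerivAt (fun y => tanhHidden n A b y l i) F x ∧
      F u = tanhDir n A b x u l i := by
  intro l
  induction l with
  | zero =>
    intro i
    refine ⟨(ContinuousLinearMap.proj i : (Fin (n 0) → ℝ) →L[ℝ] ℝ), ?_, rfl⟩
    exact (ContinuousLinearMap.proj i : (Fin (n 0) → ℝ) →L[ℝ] ℝ).hasFDerivAt
  | succ l ih =>
    intro i
    choose F hF hFu using ih
    have haff : HasFDerivAt (fun y => ∑ j, A l i j * tanhHidden n A b y l j + b l i)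
        (∑ j, A l i j • F j) x := by
      have hs : HasFDerivAt (fun y => ∑ j, A l i j * tanhHidden n A b y l j)
          (∑ j, A l i j • F j) x :=
        HasFDerivAt.fun_sum (fun j _ => (hF j).const_mul (A l i j))
      exact hs.add_const (b l i)
    have htanh := (my_hasDerivAt_tanh
      (∑ j, A l i j * tanhHidden n A b x l j + b l i)).comp_hasFDerivAt x haff
    refine ⟨_, htanh, ?_⟩
    simp only [ContinuousLinearMap.smul_apply, ContinuousLinearMap.sum_apply,
      ContinuousLinearMap.smul_apply]
    rw [tanhDir]
    simp only [smul_eq_mul]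
    congr 1
    exact Finset.sum_congr rfl fun j _ => by rw [hFu]

/-! ### Quantitative bound sequences -/

/-- Bound on the entries of the directional derivative at layer `l`. -/
noncomputable def Pb (W B : ℝ) : ℕ → ℝ
  | 0 => 1
  | l + 1 => B * (W * B) ^ l

/-- Bound on the parameter-perturbation of the directional derivative at layer `l`. -/
noncomputable def Eb (W B d : ℝ) : ℕ → ℝ
  | 0 => 0
  | l + 1 => (W + 1) * d * ((l : ℝ) + 1) * (W * B) ^ l * Pb W B (l + 1)
      + W * d * Pb W B l + W * B * Eb W B d l

lemma Pb_nonneg (W B : ℝ) (hW : 0 ≤ W) (hB : 0 ≤ B) : ∀ l, 0 ≤ Pb W B l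
  | 0 => zero_le_one
  | l + 1 => by
      show (0:ℝ) ≤ B * (W * B) ^ l
      positivity

lemma Eb_nonneg (W B d : ℝ) (hW : 0 ≤ W) (hB : 0 ≤ B) (hd : 0 ≤ d) : ∀ l, 0 ≤ Eb W B d l
  | 0 => le_refl 0
  | l + 1 => by
      have h1 := Eb_nonneg W B d hW hB hd l
      have h2 := Pb_nonneg W B hW hB l
      have h3 := Pb_nonneg W B hW hB (l + 1)
      show (0:ℝ) ≤ (W + 1) * d * ((l : ℝ) + 1) * (W * B) ^ l * Pb W B (l + 1)
        + W * d * Pb W B l + W * B * Eb W B d l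
      have hl : (0:ℝ) ≤ (l : ℝ) + 1 := by positivity
      have hp : (0:ℝ) ≤ (W * B) ^ l := by positivity
      have t1 : (0:ℝ) ≤ (W + 1) * d * ((l : ℝ) + 1) * (W * B) ^ l * Pb W B (l + 1) := by
        apply mul_nonneg; apply mul_nonneg; apply mul_nonneg; apply mul_nonneg
        all_goals first | positivity | assumption
      have t2 : (0:ℝ) ≤ W * d * Pb W B l := by
        apply mul_nonneg (mul_nonneg hW hd) h2
      have t3 : (0:ℝ) ≤ W * B * Eb W B d l := mul_nonneg (mul_nonneg hW hB) h1
      linarith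

set_option maxHeartbeats 1000000 in
lemma final_arith (Wr B d : ℝ) (hW : 1 ≤ Wr) (hB : 1 ≤ B) (hd : 0 ≤ d) :
    ∀ l : ℕ, 1 ≤ l →
      Wr * d * Pb Wr B l + Wr * B * Eb Wr B d l ≤ ((l : ℝ) + 1) ^ 2 * (Wr * B) ^ (2 * l) * d := by
  have hW0 : (0:ℝ) ≤ Wr := by linarith
  have hB0 : (0:ℝ) ≤ B := by linarith
  have hM1 : (1:ℝ) ≤ Wr * B := by nlinarith
  have hM0 : (0:ℝ) ≤ Wr * B := by linarith
  intro l
  induction l with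
  | zero => intro h; exact absurd h (by norm_num)
  | succ m ih =>
    intro _
    have hX1 : (1:ℝ) ≤ (Wr * B) ^ m := one_le_pow₀ hM1
    have hX0 : (0:ℝ) ≤ (Wr * B) ^ m := by linarith
    rcases Nat.eq_zero_or_pos m with hm | hm
    · subst hm
      have e1 : Pb Wr B 1 = B := by simp [Pb]
      have e2 : Eb Wr B d 1 = (Wr + 1) * d * B + Wr * d := by
        simp only [Eb, Pb, pow_zero, mul_one, mul_zero, add_zero, Nat.cast_zero, zero_add]
        try ring
      rw [e1, e2]
      push_cast
      nlinarith [mul_nonneg (mul_nonneg hd hM0) (sub_nonneg.2 hM1),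
        mul_nonneg (mul_nonneg (mul_nonneg hd (mul_nonneg hB0 hB0)) hW0) (sub_nonneg.2 hW),
        mul_nonneg (mul_nonneg (mul_nonneg hd (mul_nonneg hW0 hW0)) hB0) (sub_nonneg.2 hB)]
    · have ih' := ih hm
      have hP0 : 0 ≤ Pb Wr B m := Pb_nonneg Wr B hW0 hB0 m
      have hE0 : 0 ≤ Eb Wr B d m := Eb_nonneg Wr B d hW0 hB0 hd m
      have ePb : Pb Wr B (m + 1) = B * (Wr * B) ^ m := rfl
      have eEb : Eb Wr B d (m + 1) = (Wr + 1) * d * ((m : ℝ) + 1) * (Wr * B) ^ m * Pb Wr B (m + 1)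
          + Wr * d * Pb Wr B m + Wr * B * Eb Wr B d m := rfl
      have epow2 : (Wr * B) ^ (2 * m) = ((Wr * B) ^ m) ^ 2 := by
        rw [mul_comm 2 m, pow_mul]
      have epow : (Wr * B) ^ (2 * (m + 1)) = ((Wr * B) ^ m) ^ 2 * (Wr * B) ^ 2 := by
        have : 2 * (m + 1) = 2 * m + 2 := by ring
        rw [this, pow_add, epow2]
      rw [ePb, eEb, epow, ePb]
      rw [epow2] at ih'
      set X := (Wr * B) ^ m with hXdef
      have hmc : (0:ℝ) ≤ (m : ℝ) := Nat.cast_nonneg m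
      have push : ((m + 1 : ℕ) : ℝ) = (m : ℝ) + 1 := by push_cast; ring
      rw [push]
      -- main inequality
      have hq1 : (1:ℝ) ≤ Wr * B * X := by nlinarith
      have b1 : Wr * d * (B * X) ≤ X ^ 2 * (Wr * B) ^ 2 * d := by
        nlinarith [mul_nonneg (mul_nonneg hd (mul_nonneg hM0 hX0)) (sub_nonneg.2 hq1)]
      have b2 : Wr * B * ((Wr + 1) * d * ((m:ℝ) + 1) * X * (B * X)) ≤
          2 * ((m:ℝ) + 1) * (X ^ 2 * (Wr * B) ^ 2 * d) := by
        nlinarith [mul_nonneg (mul_nonneg (mul_nonneg (mul_nonneg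
          (by linarith : (0:ℝ) ≤ (m:ℝ) + 1) (mul_nonneg hX0 hX0)) hd) hM0)
          (mul_nonneg hB0 (sub_nonneg.2 hW))]
      have hS := mul_le_mul_of_nonneg_left ih' hM0
      have b3 : Wr * B * (((m:ℝ) + 1) ^ 2 * X ^ 2 * d) ≤
          ((m:ℝ) + 1) ^ 2 * (X ^ 2 * (Wr * B) ^ 2 * d) := by
        nlinarith [mul_nonneg (mul_nonneg (mul_nonneg (sq_nonneg ((m:ℝ) + 1))
          (mul_nonneg hX0 hX0)) hd) (mul_nonneg hM0 (sub_nonneg.2 hM1))]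
      nlinarith [b1, b2, hS, b3]

set_option maxHeartbeats 4000000 in
/-- Lipschitz dependence of the gradient of a tanh network on its parameters: if two
networks with the same architecture (depth `L ≥ 2`, width `W`, input dimension
`n 0 ≤ W`) have parameters bounded by `Bθ ≥ 1` and differing entrywise by at most `d`
(so that `|θ - θ̃|_{l^∞} ≤ d`), then for every `x ∈ [-1,1]^{n 0}` and every coordinate
`k`, `|∂ v_θ/∂ x_k (x) - ∂ v_θ̃/∂ x_k (x)| ≤ L² W^(2L-2) Bθ^(2L-2) d`. -/
theorem tanhNet_grad_param_lipschitz (L : ℕ) (hL : 2 ≤ L) (n : ℕ → ℕ) (hnL : n L = 1)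
    (W : ℕ) (hW : ∀ l : ℕ, 1 ≤ l → l ≤ L → n l ≤ W) (hW0 : n 0 ≤ W)
    (A A' : ∀ l : ℕ, Fin (n (l + 1)) → Fin (n l) → ℝ)
    (b b' : ∀ l : ℕ, Fin (n (l + 1)) → ℝ) (Bθ : ℝ) (hB1 : 1 ≤ Bθ)
    (hA : ∀ l : ℕ, l < L → ∀ i j, |A l i j| ≤ Bθ)
    (hb : ∀ l : ℕ, l < L → ∀ i, |b l i| ≤ Bθ)
    (hA' : ∀ l : ℕ, l < L → ∀ i j, |A' l i j| ≤ Bθ)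
    (hb' : ∀ l : ℕ, l < L → ∀ i, |b' l i| ≤ Bθ)
    (d : ℝ)
    (hdA : ∀ l : ℕ, l < L → ∀ i j, |A l i j - A' l i j| ≤ d)
    (hdb : ∀ l : ℕ, l < L → ∀ i, |b l i - b' l i| ≤ d) :
    ∀ x : Fin (n 0) → ℝ, (∀ k, x k ∈ Set.Icc (-1 : ℝ) 1) →
      ∀ (i : Fin (n (L - 1 + 1))) (k : Fin (n 0)),
        |fderiv ℝ (fun y => tanhNet L n A b y i) x (Pi.single k 1) -
            fderiv ℝ (fun y => tanhNet L n A' b' y i) x (Pi.single k 1)| ≤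
          (L : ℝ) ^ 2 * (W : ℝ) ^ (2 * L - 2) * Bθ ^ (2 * L - 2) * d := by
  intro x hx i k
  set u : Fin (n 0) → ℝ := Pi.single k 1 with hu_def
  have hd0 : (0:ℝ) ≤ d := le_trans (abs_nonneg _) (hdb (L - 1) (by omega) i)
  have hB0 : (0:ℝ) ≤ Bθ := by linarith
  have hW1 : 1 ≤ W := hnL ▸ hW L (by omega) le_rfl
  have hWR : (1:ℝ) ≤ (W:ℝ) := by exact_mod_cast hW1
  have hWR0 : (0:ℝ) ≤ (W:ℝ) := by linarith
  have hM : (1:ℝ) ≤ (W:ℝ) * Bθ := by nlinarith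
  have hM0 : (0:ℝ) ≤ (W:ℝ) * Bθ := by linarith
  have hnW : ∀ l : ℕ, l ≤ L → n l ≤ W := by
    intro l hl
    cases l with
    | zero => exact hW0
    | succ m => exact hW _ (by omega) hl
  -- boundedness of hidden layers
  have hu : ∀ j, |u j| ≤ 1 := by
    intro j
    rw [hu_def]
    rcases eq_or_ne j k with h | h
    · subst h; rw [Pi.single_eq_same]; norm_num
    · rw [Pi.single_eq_of_ne h]; norm_num
  have hh1 : ∀ (Ag : ∀ l : ℕ, Fin (n (l + 1)) → Fin (n l) → ℝ)
      (bg : ∀ l : ℕ, Fin (n (l + 1)) → ℝ) (l : ℕ) (j : Fin (n l)),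
      |tanhHidden n Ag bg x l j| ≤ 1 := by
    intro Ag bg l j
    cases l with
    | zero => exact abs_le.2 ⟨(hx j).1, (hx j).2⟩
    | succ m => exact my_abs_tanh_le_one _
  -- generic bounded-sum estimate
  have sumAbs : ∀ (m : ℕ) (c v : Fin m → ℝ) (β γ : ℝ), 0 ≤ β →
      (∀ j, |c j| ≤ β) → (∀ j, |v j| ≤ γ) → |∑ j, c j * v j| ≤ (m:ℝ) * β * γ := by
    intro m c v β γ hβ hc hv
    calc |∑ j, c j * v j| ≤ ∑ j, |c j * v j| := Finset.abs_sum_le_sum_abs _ _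
      _ ≤ ∑ _j : Fin m, β * γ := Finset.sum_le_sum (fun j _ => by
          rw [abs_mul]; exact mul_le_mul (hc j) (hv j) (abs_nonneg _) hβ)
      _ = (m:ℝ) * (β * γ) := by
          simp [Finset.sum_const, Finset.card_univ, nsmul_eq_mul]
      _ = (m:ℝ) * β * γ := by ring
  -- difference of two weighted sums
  have sumDiff : ∀ (m : ℕ), (m ≤ W) → ∀ (a a' v v' : Fin m → ℝ) (γP γE : ℝ), 0 ≤ γP → 0 ≤ γE →
      (∀ j, |a j - a' j| ≤ d) → (∀ j, |a' j| ≤ Bθ) → (∀ j, |v j| ≤ γP) →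
      (∀ j, |v j - v' j| ≤ γE) →
      |(∑ j, a j * v j) - (∑ j, a' j * v' j)| ≤ (W:ℝ) * d * γP + (W:ℝ) * Bθ * γE := by
    intro m hm a a' v v' γP γE hγP hγE ha ha' hv hvv
    have hmW : (m:ℝ) ≤ (W:ℝ) := by exact_mod_cast hm
    have e : (∑ j, a j * v j) - (∑ j, a' j * v' j)
        = (∑ j, (a j - a' j) * v j) + (∑ j, a' j * (v j - v' j)) := by
      rw [← Finset.sum_add_distrib, ← Finset.sum_sub_distrib]
      exact Finset.sum_congr rfl fun j _ => by ring
    rw [e]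
    have h1 := sumAbs m (fun j => a j - a' j) v d γP hd0 ha hv
    have h2 := sumAbs m a' (fun j => v j - v' j) Bθ γE hB0 ha' hvv
    have habs := abs_add_le (∑ j, (a j - a' j) * v j) (∑ j, a' j * (v j - v' j))
    nlinarith [mul_nonneg (mul_nonneg (sub_nonneg.2 hmW) hd0) hγP,
      mul_nonneg (mul_nonneg (sub_nonneg.2 hmW) hB0) hγE]
  -- hidden layer and preactivation differences
  have hΔ : ∀ l : ℕ, l < L →
      (∀ j : Fin (n l), |tanhHidden n A b x l j - tanhHidden n A' b' x l j| ≤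
        ((W:ℝ) + 1) * d * (l:ℝ) * ((W:ℝ) * Bθ) ^ (l - 1)) ∧
      (∀ i2 : Fin (n (l + 1)),
        |(∑ j, A l i2 j * tanhHidden n A b x l j + b l i2) -
          (∑ j, A' l i2 j * tanhHidden n A' b' x l j + b' l i2)| ≤
        ((W:ℝ) + 1) * d * ((l:ℝ) + 1) * ((W:ℝ) * Bθ) ^ l) := by
    intro l
    induction l with
    | zero =>
      intro _
      constructor
      · intro j
        show |x j - x j| ≤ ((W:ℝ) + 1) * d * ((0:ℕ):ℝ) * ((W:ℝ) * Bθ) ^ (0 - 1)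
        simp
      · intro i2
        have hzero : ∀ j : Fin (n 0),
            |tanhHidden n A b x 0 j - tanhHidden n A' b' x 0 j| ≤ 0 := by
          intro j; show |x j - x j| ≤ 0; simp
        have key := sumDiff (n 0) hW0 (fun j => A 0 i2 j) (fun j => A' 0 i2 j)
          (tanhHidden n A b x 0) (tanhHidden n A' b' x 0) 1 0 zero_le_one le_rfl
          (hdA 0 (by omega) i2) (hA' 0 (by omega) i2) (hh1 A b 0) hzero
        have hbb := hdb 0 (by omega) i2
        have habs := abs_add_le
          ((∑ j, A 0 i2 j * tanhHidden n A b x 0 j) - ∑ j, A' 0 i2 j * tanhHidden n A' b' x 0 j)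
          (b 0 i2 - b' 0 i2)
        have e : (∑ j, A 0 i2 j * tanhHidden n A b x 0 j + b 0 i2) -
            (∑ j, A' 0 i2 j * tanhHidden n A' b' x 0 j + b' 0 i2)
            = ((∑ j, A 0 i2 j * tanhHidden n A b x 0 j) -
                ∑ j, A' 0 i2 j * tanhHidden n A' b' x 0 j) + (b 0 i2 - b' 0 i2) := by ring
        rw [e]
        have : ((0:ℕ):ℝ) = 0 := by norm_num
        rw [this]
        rw [pow_zero]
        nlinarith [key, hbb, habs]
    | succ l ih =>
      intro hsucc
      have hl : l < L := by omega
      obtain ⟨ih1, ih2⟩ := ih hl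
      have first : ∀ j : Fin (n (l + 1)),
          |tanhHidden n A b x (l + 1) j - tanhHidden n A' b' x (l + 1) j| ≤
          ((W:ℝ) + 1) * d * ((l:ℝ) + 1) * ((W:ℝ) * Bθ) ^ l := by
        intro j
        have step : tanhHidden n A b x (l + 1) j - tanhHidden n A' b' x (l + 1) j
            = Real.tanh (∑ j', A l j j' * tanhHidden n A b x l j' + b l j)
              - Real.tanh (∑ j', A' l j j' * tanhHidden n A' b' x l j' + b' l j) := rfl
        rw [step]
        exact le_trans (my_tanh_lipschitz _ _) (ih2 j)
      have firstcast : ∀ j : Fin (n (l + 1)),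
          |tanhHidden n A b x (l + 1) j - tanhHidden n A' b' x (l + 1) j| ≤
          ((W:ℝ) + 1) * d * (((l:ℕ) + 1 : ℕ):ℝ) * ((W:ℝ) * Bθ) ^ ((l + 1) - 1) := by
        intro j
        have := first j
        have e1 : (((l:ℕ) + 1 : ℕ):ℝ) = (l:ℝ) + 1 := by push_cast; ring
        have e2 : (l + 1) - 1 = l := by omega
        rw [e1, e2]
        exact this
      refine ⟨firstcast, ?_⟩
      intro i2
      have key := sumDiff (n (l + 1)) (hnW (l + 1) (by omega))
        (fun j => A (l + 1) i2 j) (fun j => A' (l + 1) i2 j)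
        (tanhHidden n A b x (l + 1)) (tanhHidden n A' b' x (l + 1)) 1
        (((W:ℝ) + 1) * d * ((l:ℝ) + 1) * ((W:ℝ) * Bθ) ^ l)
        zero_le_one (by positivity)
        (hdA (l + 1) hsucc i2) (hA' (l + 1) hsucc i2) (hh1 A b (l + 1)) first
      have hbb := hdb (l + 1) hsucc i2
      have e : (∑ j, A (l + 1) i2 j * tanhHidden n A b x (l + 1) j + b (l + 1) i2) -
          (∑ j, A' (l + 1) i2 j * tanhHidden n A' b' x (l + 1) j + b' (l + 1) i2)
          = ((∑ j, A (l + 1) i2 j * tanhHidden n A b x (l + 1) j) -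
              ∑ j, A' (l + 1) i2 j * tanhHidden n A' b' x (l + 1) j)
            + (b (l + 1) i2 - b' (l + 1) i2) := by ring
      rw [e]
      have habs := abs_add_le
        ((∑ j, A (l + 1) i2 j * tanhHidden n A b x (l + 1) j) -
          ∑ j, A' (l + 1) i2 j * tanhHidden n A' b' x (l + 1) j)
        (b (l + 1) i2 - b' (l + 1) i2)
      have ecast : (((l:ℕ) + 1 : ℕ):ℝ) = (l:ℝ) + 1 := by push_cast; ring
      rw [ecast]
      have hps : ((W:ℝ) * Bθ) ^ (l + 1) = ((W:ℝ) * Bθ) ^ l * ((W:ℝ) * Bθ) := pow_succ _ _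
      rw [hps]
      have hXl : (1:ℝ) ≤ ((W:ℝ) * Bθ) ^ l := one_le_pow₀ hM
      have hXl0 : (0:ℝ) ≤ ((W:ℝ) * Bθ) ^ l := by linarith
      have hcast0 : (0:ℝ) ≤ (l:ℝ) := Nat.cast_nonneg l
      nlinarith [key, hbb, habs,
        mul_nonneg (mul_nonneg (by linarith : (0:ℝ) ≤ (W:ℝ) + 1) hd0)
          (sub_nonneg.2 (by nlinarith : (1:ℝ) ≤ ((W:ℝ) * Bθ) ^ l * ((W:ℝ) * Bθ)))]
  -- bounds on directional derivatives
  have hu_single : ∀ (c : Fin (n 0) → ℝ), ∑ j, c j * u j = c k := by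
    intro c
    rw [hu_def]
    simp [Pi.single_apply, mul_ite, Finset.sum_ite_eq']
  have hP : ∀ (Ag : ∀ l : ℕ, Fin (n (l + 1)) → Fin (n l) → ℝ)
      (bg : ∀ l : ℕ, Fin (n (l + 1)) → ℝ),
      (∀ l : ℕ, l < L → ∀ i2 j, |Ag l i2 j| ≤ Bθ) →
      ∀ l : ℕ, l < L →
      (∀ j : Fin (n l), |tanhDir n Ag bg x u l j| ≤ Pb (W:ℝ) Bθ l) ∧
      (∀ i2 : Fin (n (l + 1)),
        |∑ j, Ag l i2 j * tanhDir n Ag bg x u l j| ≤ Pb (W:ℝ) Bθ (l + 1)) := by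
    intro Ag bg hAg l
    induction l with
    | zero =>
      intro _
      constructor
      · intro j
        show |u j| ≤ Pb (W:ℝ) Bθ 0
        exact hu j
      · intro i2
        have e : ∑ j, Ag 0 i2 j * tanhDir n Ag bg x u 0 j = Ag 0 i2 k := hu_single _
        rw [e]
        have : Pb (W:ℝ) Bθ 1 = Bθ := by
          show Bθ * ((W:ℝ) * Bθ) ^ 0 = Bθ; simp
        rw [this]
        exact hAg 0 (by omega) i2 k
    | succ l ih =>
      intro hsucc
      have hl : l < L := by omega
      obtain ⟨ih1, ih2⟩ := ih hl
      have first : ∀ j : Fin (n (l + 1)),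
          |tanhDir n Ag bg x u (l + 1) j| ≤ Pb (W:ℝ) Bθ (l + 1) := by
        intro j
        have step : tanhDir n Ag bg x u (l + 1) j
            = (1 - Real.tanh (∑ j', Ag l j j' * tanhHidden n Ag bg x l j' + bg l j) ^ 2) *
              ∑ j', Ag l j j' * tanhDir n Ag bg x u l j' := rfl
        rw [step, abs_mul]
        have h1 := my_abs_one_sub_tanh_sq_le_one
          (∑ j', Ag l j j' * tanhHidden n Ag bg x l j' + bg l j)
        have h2 := ih2 j
        have hp := Pb_nonneg (W:ℝ) Bθ hWR0 hB0 (l + 1)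
        nlinarith [abs_nonneg (∑ j', Ag l j j' * tanhDir n Ag bg x u l j')]
      refine ⟨first, ?_⟩
      intro i2
      have key := sumAbs (n (l + 1)) (fun j => Ag (l + 1) i2 j)
        (tanhDir n Ag bg x u (l + 1)) Bθ (Pb (W:ℝ) Bθ (l + 1)) hB0
        (hAg (l + 1) hsucc i2) first
      have hmW : ((n (l + 1) : ℕ):ℝ) ≤ (W:ℝ) := by
        exact_mod_cast hnW (l + 1) (by omega)
      have hp := Pb_nonneg (W:ℝ) Bθ hWR0 hB0 (l + 1)
      have e : Pb (W:ℝ) Bθ (l + 1 + 1) = ((W:ℝ) * Bθ) * Pb (W:ℝ) Bθ (l + 1) := by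
        show Bθ * ((W:ℝ) * Bθ) ^ (l + 1) = ((W:ℝ) * Bθ) * (Bθ * ((W:ℝ) * Bθ) ^ l)
        rw [pow_succ]; ring
      rw [e]
      refine le_trans key ?_
      nlinarith [mul_nonneg hB0 hp, hmW]
  have hPA := hP A b hA
  have hPA' := hP A' b' hA'
  -- difference of directional derivatives
  have hE : ∀ l : ℕ, l < L → ∀ j : Fin (n l),
      |tanhDir n A b x u l j - tanhDir n A' b' x u l j| ≤ Eb (W:ℝ) Bθ d l := by
    intro l
    induction l with
    | zero =>
      intro _ j
      show |u j - u j| ≤ Eb (W:ℝ) Bθ d 0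
      simp [Eb]
    | succ l ih =>
      intro hsucc j
      have hl : l < L := by omega
      have ihl := ih hl
      have step : tanhDir n A b x u (l + 1) j - tanhDir n A' b' x u (l + 1) j
          = ((1 - Real.tanh (∑ j', A l j j' * tanhHidden n A b x l j' + b l j) ^ 2)
              - (1 - Real.tanh (∑ j', A' l j j' * tanhHidden n A' b' x l j' + b' l j) ^ 2)) *
              (∑ j', A l j j' * tanhDir n A b x u l j')
            + (1 - Real.tanh (∑ j', A' l j j' * tanhHidden n A' b' x l j' + b' l j) ^ 2) *
              ((∑ j', A l j j' * tanhDir n A b x u l j')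
                - (∑ j', A' l j j' * tanhDir n A' b' x u l j')) := by
        show (1 - Real.tanh (∑ j', A l j j' * tanhHidden n A b x l j' + b l j) ^ 2) *
              (∑ j', A l j j' * tanhDir n A b x u l j')
            - (1 - Real.tanh (∑ j', A' l j j' * tanhHidden n A' b' x l j' + b' l j) ^ 2) *
              (∑ j', A' l j j' * tanhDir n A' b' x u l j') = _
        ring
      rw [step]
      have t1 : |(1 - Real.tanh (∑ j', A l j j' * tanhHidden n A b x l j' + b l j) ^ 2)
          - (1 - Real.tanh (∑ j', A' l j j' * tanhHidden n A' b' x l j' + b' l j) ^ 2)| ≤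
          ((W:ℝ) + 1) * d * ((l:ℝ) + 1) * ((W:ℝ) * Bθ) ^ l :=
        le_trans (my_dtanh_lipschitz _ _) ((hΔ l hl).2 j)
      have t2 : |∑ j', A l j j' * tanhDir n A b x u l j'| ≤ Pb (W:ℝ) Bθ (l + 1) :=
        (hPA l hl).2 j
      have t3 : |1 - Real.tanh (∑ j', A' l j j' * tanhHidden n A' b' x l j' + b' l j) ^ 2| ≤ 1 :=
        my_abs_one_sub_tanh_sq_le_one _
      have t4 : |(∑ j', A l j j' * tanhDir n A b x u l j')
          - (∑ j', A' l j j' * tanhDir n A' b' x u l j')| ≤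
          (W:ℝ) * d * Pb (W:ℝ) Bθ l + (W:ℝ) * Bθ * Eb (W:ℝ) Bθ d l := by
        exact sumDiff (n l) (hnW l (by omega)) (fun j' => A l j j') (fun j' => A' l j j')
          (tanhDir n A b x u l) (tanhDir n A' b' x u l)
          (Pb (W:ℝ) Bθ l) (Eb (W:ℝ) Bθ d l)
          (Pb_nonneg (W:ℝ) Bθ hWR0 hB0 l) (Eb_nonneg (W:ℝ) Bθ d hWR0 hB0 hd0 l)
          (hdA l hl j) (hA' l hl j) (hPA l hl).1 ihl
      have habs := abs_add_le
        (((1 - Real.tanh (∑ j', A l j j' * tanhHidden n A b x l j' + b l j) ^ 2)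
            - (1 - Real.tanh (∑ j', A' l j j' * tanhHidden n A' b' x l j' + b' l j) ^ 2)) *
            (∑ j', A l j j' * tanhDir n A b x u l j'))
        ((1 - Real.tanh (∑ j', A' l j j' * tanhHidden n A' b' x l j' + b' l j) ^ 2) *
            ((∑ j', A l j j' * tanhDir n A b x u l j')
              - (∑ j', A' l j j' * tanhDir n A' b' x u l j')))
      rw [abs_mul, abs_mul] at habs
      have eEb : Eb (W:ℝ) Bθ d (l + 1)
          = ((W:ℝ) + 1) * d * ((l:ℝ) + 1) * ((W:ℝ) * Bθ) ^ l * Pb (W:ℝ) Bθ (l + 1)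
            + (W:ℝ) * d * Pb (W:ℝ) Bθ l + (W:ℝ) * Bθ * Eb (W:ℝ) Bθ d l := rfl
      rw [eEb]
      have hγ1 : (0:ℝ) ≤ ((W:ℝ) + 1) * d * ((l:ℝ) + 1) * ((W:ℝ) * Bθ) ^ l := by positivity
      have hp1 := Pb_nonneg (W:ℝ) Bθ hWR0 hB0 (l + 1)
      have hsum4 : (0:ℝ) ≤ (W:ℝ) * d * Pb (W:ℝ) Bθ l + (W:ℝ) * Bθ * Eb (W:ℝ) Bθ d l :=
        le_trans (abs_nonneg _) t4
      have m1 := mul_le_mul t1 t2 (abs_nonneg _) hγ1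
      have m2 := mul_le_mul t3 t4 (abs_nonneg _) zero_le_one
      linarith [habs, m1, m2]
  -- compute the two fderivs
  have hfd : ∀ (Ag : ∀ l : ℕ, Fin (n (l + 1)) → Fin (n l) → ℝ)
      (bg : ∀ l : ℕ, Fin (n (l + 1)) → ℝ),
      fderiv ℝ (fun y => tanhNet L n Ag bg y i) x u
        = ∑ j, Ag (L - 1) i j * tanhDir n Ag bg x u (L - 1) j := by
    intro Ag bg
    choose F hF hFu using fun j : Fin (n (L - 1)) => tanhHidden_hasFDerivAt n Ag bg x u (L - 1) j
    have hnet : HasFDerivAt (fun y => tanhNet L n Ag bg y i)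
        (∑ j, Ag (L - 1) i j • F j) x := by
      have hs : HasFDerivAt (fun y => ∑ j, Ag (L - 1) i j * tanhHidden n Ag bg y (L - 1) j)
          (∑ j, Ag (L - 1) i j • F j) x :=
        HasFDerivAt.fun_sum (fun j _ => (hF j).const_mul (Ag (L - 1) i j))
      exact hs.add_const (bg (L - 1) i)
    rw [hnet.fderiv]
    simp only [ContinuousLinearMap.sum_apply, ContinuousLinearMap.smul_apply, smul_eq_mul]
    exact Finset.sum_congr rfl fun j _ => by rw [hFu]
  rw [hfd A b, hfd A' b']
  -- final estimate
  have hL1 : L - 1 < L := by omega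
  have t1 := (hPA (L - 1) hL1).1
  have t2 := hE (L - 1) hL1
  have key := sumDiff (n (L - 1)) (hnW (L - 1) (by omega))
    (fun j => A (L - 1) i j) (fun j => A' (L - 1) i j)
    (tanhDir n A b x u (L - 1)) (tanhDir n A' b' x u (L - 1))
    (Pb (W:ℝ) Bθ (L - 1)) (Eb (W:ℝ) Bθ d (L - 1))
    (Pb_nonneg (W:ℝ) Bθ hWR0 hB0 (L - 1)) (Eb_nonneg (W:ℝ) Bθ d hWR0 hB0 hd0 (L - 1))
    (hdA (L - 1) hL1 i) (hA' (L - 1) hL1 i) t1 t2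
  refine le_trans key ?_
  have harith := final_arith (W:ℝ) Bθ d hWR hB1 hd0 (L - 1) (by omega)
  refine le_trans harith ?_
  have e1 : (((L - 1 : ℕ)):ℝ) + 1 = (L : ℝ) := by
    have : ((L - 1 : ℕ):ℝ) = (L:ℝ) - 1 := by
      have h1 : 1 ≤ L := by omega
      push_cast [Nat.cast_sub h1]
      ring
    rw [this]; ring
  have e2 : 2 * (L - 1) = 2 * L - 2 := by omega
  rw [e1, e2, mul_pow]
  exact le_of_eq (by ring)
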